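/- arXiv:1404.2624 — 7 statements merged into one kernel-verified Lean document; each statement's English description precedes it below -/
import Mathlib

section
/- For every integer n ≥ 3 there exists a set V of n points in the Euclidean plane ℝ² whose number of double-normal pairs equals exactly 3·⌊n/2⌋. -/
open scoped RealInnerProductSpace Classical

noncomputable section

abbrev Euc (d : ℕ) : Type := EuclideanSpace ℝ (Fin d)

/-- `{p, q}` is a double-normal pair of the finite point set `V`. -/
def IsDNPair {d : ℕ} (V : Finset (Euc d)) (p q : Euc d) : Prop :=
  p ∈ V ∧ q ∈ V ∧ p ≠ q ∧
    ∀ v ∈ V, 0 ≤ ⟪v - p, q - p⟫ ∧ 0 ≤ ⟪v - q, p - q⟫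

/-- `N(V)`: the number of (unordered) double-normal pairs of `V`. -/
def numDN {d : ℕ} (V : Finset (Euc d)) : ℕ :=
  ((V ×ˢ V).filter fun pq => IsDNPair V pq.1 pq.2).card / 2

/-- `{p, q}` is a strict double-normal pair of `V`. -/
def IsStrictDNPair {d : ℕ} (V : Finset (Euc d)) (p q : Euc d) : Prop :=
  IsDNPair V p q ∧
    ∀ v ∈ V, v ≠ p → v ≠ q → 0 < ⟪v - p, q - p⟫ ∧ 0 < ⟪v - q, p - q⟫

/-- `N'(V)`: the number of (unordered) strict double-normal pairs of `V`. -/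
def numStrictDN {d : ℕ} (V : Finset (Euc d)) : ℕ :=
  ((V ×ˢ V).filter fun pq => IsStrictDNPair V pq.1 pq.2).card / 2

/-!
For `w = s + t i` let `circlePoint s t = w² / |w|²`. Then
`⟪circlePoint w₃ - circlePoint w₁, circlePoint w₂ - circlePoint w₁⟫` has the sign of
`(w₁ × w₃) (w₁ × w₂) (w₃ · w₂)`. For the points `upperPt a = circlePoint 1 a`, `a ∈ X`, and the
antipodes `lowerPt b = circlePoint (-b) 1`, `b ∈ Y`, of such points, with `X`, `Y` sets of
naturals, double normality thereby becomes a condition on the parameters: two points of the same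
kind form a double normal iff every parameter in `X ∪ Y` lies between theirs, and `upperPt a`,
`lowerPt b` iff no parameter lies strictly between `a` and `b`. For `X = {0, …, p - 1}` and
`Y = {0, …, q - 1}` with `q ≤ p ≤ q + 1` this leaves the pair `upperPt 0`, `upperPt (p - 1)`, the
pair `lowerPt 0`, `lowerPt (q - 1)` if `p = q`, and the `3q - 2 + (p - q)` pairs `upperPt a`,
`lowerPt b` with `|a - b| ≤ 1`: `3q` double normals among `p + q` points.
-/

open Finset

theorem isDNPair_comm {d : ℕ} {V : Finset (Euc d)} {p q : Euc d} :
    IsDNPair V p q ↔ IsDNPair V q p := by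
  unfold IsDNPair
  exact ⟨fun ⟨hp, hq, hpq, h⟩ => ⟨hq, hp, hpq.symm, fun v hv => (h v hv).symm⟩,
    fun ⟨hq, hp, hqp, h⟩ => ⟨hp, hq, hqp.symm, fun v hv => (h v hv).symm⟩⟩

theorem isDNPair_image_iff {d : ℕ} (f : Euc d ≃ₗᵢ[ℝ] Euc d) {V : Finset (Euc d)} {p q : Euc d} :
    IsDNPair (V.image f) (f p) (f q) ↔ IsDNPair V p q := by
  simp only [IsDNPair, f.injective.mem_finset_image, f.injective.ne_iff, forall_mem_image,
    ← map_sub, LinearIsometryEquiv.inner_map_map]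

theorem inner_sub_neg_neg_sub_neg {d : ℕ} (u p q : Euc d) :
    ⟪u - -p, -q - -p⟫ = ⟪-u - p, q - p⟫ := by
  rw [← inner_neg_neg]
  congr 1 <;> abel

theorem card_filter_image_product {α β E : Type*} [DecidableEq E] {f : α → E} {g : β → E}
    {s : Finset α} {t : Finset β} (hf : Set.InjOn f s) (hg : Set.InjOn g t) (P : E → E → Prop) :
    ((s.image f ×ˢ t.image g).filter fun x => P x.1 x.2).card =
      ((s ×ˢ t).filter fun x => P (f x.1) (g x.2)).card := by
  rw [← prodMap_image_product, filter_image, card_image_of_injOn]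
  · rfl
  · exact (hf.prodMap hg).mono (coe_product s t ▸ coe_subset.2 (filter_subset _ _))

theorem card_filter_product_of_eq_union {E : Type*} [DecidableEq E] {V S T : Finset E}
    (hV : V = S ∪ T) (hST : Disjoint S T) {P : E → E → Prop} (hP : ∀ x y, P x y → P y x) :
    ((V ×ˢ V).filter fun x => P x.1 x.2).card =
      ((S ×ˢ S).filter fun x => P x.1 x.2).card + ((T ×ˢ T).filter fun x => P x.1 x.2).card +
        2 * ((S ×ˢ T).filter fun x => P x.1 x.2).card := by
  have hswap : ((T ×ˢ S).filter fun x => P x.1 x.2).card =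
      ((S ×ˢ T).filter fun x => P x.1 x.2).card := by
    rw [← image_swap_product S T, filter_image, card_image_of_injective _ Prod.swap_injective]
    exact congrArg card (filter_congr fun x _ => ⟨hP _ _, hP _ _⟩)
  have hdisj {A B C D : Finset E} (h : Disjoint A B ∨ Disjoint C D) :
      Disjoint ((A ×ˢ C).filter fun x => P x.1 x.2) ((B ×ˢ D).filter fun x => P x.1 x.2) :=
    disjoint_filter_filter (disjoint_product.2 h)
  rw [hV, union_product, product_union, product_union, filter_union, filter_union, filter_union,
    card_union_of_disjoint, card_union_of_disjoint, card_union_of_disjoint, hswap]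
  · ring
  · exact hdisj (.inr hST)
  · exact hdisj (.inr hST)
  · exact disjoint_union_left.2 ⟨disjoint_union_right.2 ⟨hdisj (.inl hST), hdisj (.inl hST)⟩,
      disjoint_union_right.2 ⟨hdisj (.inl hST), hdisj (.inl hST)⟩⟩

theorem sub_mul_sub_nonneg_iff_natCast (a b c d : ℕ) :
    0 ≤ ((a : ℝ) - b) * ((c : ℝ) - d) ↔ b ≤ a ∧ d ≤ c ∨ a ≤ b ∧ c ≤ d := by
  simp [mul_nonneg_iff, sub_nonneg]

theorem forall_mem_range_union_range {p q : ℕ} {P : ℕ → Prop} :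
    (∀ c ∈ range p ∪ range q, P c) ↔ ∀ c < max p q, P c := by
  simp only [mem_union, mem_range, lt_max_iff]

theorem forall_lt_le_and_le_iff {m lo hi : ℕ} (hm : 0 < m) :
    (∀ c < m, lo ≤ c ∧ c ≤ hi) ↔ lo = 0 ∧ m ≤ hi + 1 :=
  ⟨fun h => ⟨by have := (h 0 hm).1; omega, by have := (h (m - 1) (by omega)).2; omega⟩,
    fun h c hc => by omega⟩

theorem forall_lt_le_or_le_iff {m lo hi : ℕ} (hm : hi < m) :
    (∀ c < m, c ≤ lo ∨ hi ≤ c) ↔ hi ≤ lo + 1 :=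
  ⟨fun h => by by_contra; have := h (lo + 1) (by omega); omega, fun h c _ => by omega⟩

def circlePoint (s t : ℝ) : Euc 2 :=
  !₂[(s ^ 2 - t ^ 2) / (s ^ 2 + t ^ 2), 2 * s * t / (s ^ 2 + t ^ 2)]

theorem inner_circlePoint_sub_circlePoint {s₁ t₁ s₂ t₂ s₃ t₃ : ℝ} (h₁ : s₁ ^ 2 + t₁ ^ 2 ≠ 0)
    (h₂ : s₂ ^ 2 + t₂ ^ 2 ≠ 0) (h₃ : s₃ ^ 2 + t₃ ^ 2 ≠ 0) :
    ⟪circlePoint s₃ t₃ - circlePoint s₁ t₁, circlePoint s₂ t₂ - circlePoint s₁ t₁⟫ =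
      4 * ((s₁ * t₃ - t₁ * s₃) * (s₁ * t₂ - t₁ * s₂) * (s₃ * s₂ + t₃ * t₂)) /
        ((s₁ ^ 2 + t₁ ^ 2) * (s₂ ^ 2 + t₂ ^ 2) * (s₃ ^ 2 + t₃ ^ 2)) := by
  simp only [circlePoint, EuclideanSpace.inner_eq_star_dotProduct]
  simp [Fin.sum_univ_two, dotProduct]
  field_simp
  ring

theorem inner_circlePoint_sub_circlePoint_nonneg_iff {s₁ t₁ s₂ t₂ s₃ t₃ k x : ℝ}
    (h₁ : 0 < s₁ ^ 2 + t₁ ^ 2) (h₂ : 0 < s₂ ^ 2 + t₂ ^ 2) (h₃ : 0 < s₃ ^ 2 + t₃ ^ 2) (hk : 0 < k)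
    (hx : (s₁ * t₃ - t₁ * s₃) * (s₁ * t₂ - t₁ * s₂) * (s₃ * s₂ + t₃ * t₂) = k * x) :
    0 ≤ ⟪circlePoint s₃ t₃ - circlePoint s₁ t₁, circlePoint s₂ t₂ - circlePoint s₁ t₁⟫ ↔
      0 ≤ x := by
  rw [inner_circlePoint_sub_circlePoint h₁.ne' h₂.ne' h₃.ne', le_div_iff₀ (by positivity),
    zero_mul, hx, ← mul_assoc, mul_nonneg_iff_of_pos_left (by positivity)]

def upperPt (x : ℝ) : Euc 2 := circlePoint 1 x

def lowerPt (x : ℝ) : Euc 2 := circlePoint (-x) 1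

theorem neg_upperPt (x : ℝ) : -upperPt x = lowerPt x := by
  ext i
  fin_cases i <;> simp [upperPt, lowerPt, circlePoint] <;> ring

theorem neg_lowerPt (x : ℝ) : -lowerPt x = upperPt x := by
  rw [← neg_upperPt, neg_neg]

theorem inner_upperPt_upperPt_nonneg_iff {a b c : ℝ} (hb : 0 ≤ b) (hc : 0 ≤ c) :
    0 ≤ ⟪upperPt c - upperPt a, upperPt b - upperPt a⟫ ↔ 0 ≤ (c - a) * (b - a) :=
  inner_circlePoint_sub_circlePoint_nonneg_iff (by positivity) (by positivity) (by positivity)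
    (k := 1 + c * b) (by positivity) (by ring)

theorem inner_lowerPt_upperPt_nonneg_iff {a b c : ℝ} (ha : 0 ≤ a) (hc : 0 ≤ c) :
    0 ≤ ⟪lowerPt c - upperPt a, upperPt b - upperPt a⟫ ↔ 0 ≤ (c - b) * (a - b) :=
  inner_circlePoint_sub_circlePoint_nonneg_iff (by positivity) (by positivity) (by positivity)
    (k := 1 + a * c) (by positivity) (by ring)

theorem inner_upperPt_lowerPt_nonneg_iff {a b c : ℝ} (ha : 0 ≤ a) (hb : 0 ≤ b) :
    0 ≤ ⟪upperPt c - upperPt a, lowerPt b - upperPt a⟫ ↔ 0 ≤ (c - a) * (c - b) :=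
  inner_circlePoint_sub_circlePoint_nonneg_iff (by positivity) (by positivity) (by positivity)
    (k := 1 + a * b) (by positivity) (by ring)

theorem inner_lowerPt_lowerPt_nonneg {a b c : ℝ} (ha : 0 ≤ a) (hb : 0 ≤ b) (hc : 0 ≤ c) :
    0 ≤ ⟪lowerPt c - upperPt a, lowerPt b - upperPt a⟫ :=
  (inner_circlePoint_sub_circlePoint_nonneg_iff (by positivity) (by positivity) (by positivity)
    (k := (1 + a * c) * (1 + a * b) * (1 + b * c)) (by positivity) (x := 1) (by ring)).2
      zero_le_one

theorem upperPt_injective : Function.Injective upperPt := by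
  intro a b h
  have h₀ := congrArg (· 0) h
  have h₁ := congrArg (· 1) h
  simp [upperPt, circlePoint] at h₀ h₁
  field_simp at h₀ h₁
  nlinarith [sq_nonneg (a - b), sq_nonneg (a + b)]

theorem lowerPt_injective : Function.Injective lowerPt := by
  intro a b h
  rw [← neg_upperPt, ← neg_upperPt, neg_inj] at h
  exact upperPt_injective h

theorem upperPt_natCast_injective : Function.Injective fun a : ℕ => upperPt a :=
  upperPt_injective.comp Nat.cast_injective

theorem lowerPt_natCast_injective : Function.Injective fun a : ℕ => lowerPt a :=
  lowerPt_injective.comp Nat.cast_injective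

theorem upperPt_ne_lowerPt {a b : ℝ} (ha : 0 ≤ a) (hb : 0 ≤ b) : upperPt a ≠ lowerPt b := by
  intro h
  have h₀ := congrArg (· 0) h
  have h₁ := congrArg (· 1) h
  simp [upperPt, lowerPt, circlePoint] at h₀ h₁
  field_simp at h₀ h₁
  nlinarith [mul_nonneg ha hb]

def circleConfig (X Y : Finset ℕ) : Finset (Euc 2) :=
  X.image (fun a : ℕ => upperPt a) ∪ Y.image (fun b : ℕ => lowerPt b)

section circleConfig

variable {X Y : Finset ℕ}

theorem disjoint_image_upperPt_image_lowerPt :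
    Disjoint (X.image fun a : ℕ => upperPt a) (Y.image fun b : ℕ => lowerPt b) := by
  simp only [disjoint_left, mem_image, not_exists, not_and]
  rintro _ ⟨a, -, rfl⟩ b - h
  exact upperPt_ne_lowerPt (Nat.cast_nonneg a) (Nat.cast_nonneg b) h.symm

theorem card_circleConfig : (circleConfig X Y).card = X.card + Y.card := by
  rw [circleConfig, card_union_of_disjoint disjoint_image_upperPt_image_lowerPt,
    card_image_of_injective _ upperPt_natCast_injective,
    card_image_of_injective _ lowerPt_natCast_injective]

theorem upperPt_mem_circleConfig {a : ℕ} : upperPt a ∈ circleConfig X Y ↔ a ∈ X := by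
  simp only [circleConfig, mem_union, mem_image, upperPt_injective.eq_iff, Nat.cast_inj,
    exists_eq_right]
  exact or_iff_left fun ⟨b, _, h⟩ =>
    upperPt_ne_lowerPt (Nat.cast_nonneg a) (Nat.cast_nonneg b) h.symm

theorem lowerPt_mem_circleConfig {b : ℕ} : lowerPt b ∈ circleConfig X Y ↔ b ∈ Y := by
  simp only [circleConfig, mem_union, mem_image, lowerPt_injective.eq_iff, Nat.cast_inj,
    exists_eq_right]
  exact or_iff_right fun ⟨a, _, h⟩ => upperPt_ne_lowerPt (Nat.cast_nonneg a) (Nat.cast_nonneg b) h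

theorem forall_mem_circleConfig {P : Euc 2 → Prop} :
    (∀ v ∈ circleConfig X Y, P v) ↔ (∀ c ∈ X, P (upperPt c)) ∧ ∀ c ∈ Y, P (lowerPt c) := by
  simp only [circleConfig, forall_mem_union, forall_mem_image]

theorem image_neg_circleConfig :
    (circleConfig X Y).image (LinearIsometryEquiv.neg ℝ) = circleConfig Y X := by
  simp [circleConfig, image_union, image_image, Function.comp_def, neg_upperPt, neg_lowerPt,
    union_comm]

theorem isDNPair_upperPt_upperPt {a b : ℕ} :
    IsDNPair (circleConfig X Y) (upperPt a) (upperPt b) ↔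
      a ∈ X ∧ b ∈ X ∧ a ≠ b ∧ ∀ c ∈ X ∪ Y, min a b ≤ c ∧ c ≤ max a b := by
  simp only [IsDNPair, upperPt_mem_circleConfig, upperPt_injective.ne_iff, Nat.cast_inj.ne,
    forall_mem_circleConfig, forall_mem_union,
    inner_upperPt_upperPt_nonneg_iff (Nat.cast_nonneg _) (Nat.cast_nonneg _),
    inner_lowerPt_upperPt_nonneg_iff (Nat.cast_nonneg _) (Nat.cast_nonneg _),
    sub_mul_sub_nonneg_iff_natCast]
  refine and_congr_right fun _ => and_congr_right fun _ => and_congr_right fun hab => ?_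
  refine and_congr (forall₂_congr fun c _ => ?_) (forall₂_congr fun c _ => ?_) <;> omega

theorem isDNPair_upperPt_lowerPt {a b : ℕ} :
    IsDNPair (circleConfig X Y) (upperPt a) (lowerPt b) ↔
      a ∈ X ∧ b ∈ Y ∧ ∀ c ∈ X ∪ Y, c ≤ min a b ∨ max a b ≤ c := by
  -- the condition at `lowerPt b` is the one at `upperPt b` after the antipodal map
  have hside (v : Euc 2) :
      ⟪v - lowerPt b, upperPt a - lowerPt b⟫ = ⟪-v - upperPt b, lowerPt a - upperPt b⟫ := by
    rw [← neg_upperPt b, ← neg_lowerPt a, inner_sub_neg_neg_sub_neg]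
  simp only [IsDNPair, upperPt_mem_circleConfig, lowerPt_mem_circleConfig, hside, neg_upperPt,
    neg_lowerPt, upperPt_ne_lowerPt (Nat.cast_nonneg _) (Nat.cast_nonneg _), ne_eq,
    not_false_eq_true, forall_mem_circleConfig, forall_mem_union,
    inner_upperPt_lowerPt_nonneg_iff (Nat.cast_nonneg _) (Nat.cast_nonneg _),
    inner_lowerPt_lowerPt_nonneg (Nat.cast_nonneg _) (Nat.cast_nonneg _) (Nat.cast_nonneg _),
    sub_mul_sub_nonneg_iff_natCast, true_and, and_true]
  refine and_congr_right fun _ => and_congr_right fun _ => ?_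
  refine and_congr (forall₂_congr fun c _ => ?_) (forall₂_congr fun c _ => ?_) <;> omega

theorem isDNPair_lowerPt_lowerPt {a b : ℕ} :
    IsDNPair (circleConfig X Y) (lowerPt a) (lowerPt b) ↔
      IsDNPair (circleConfig Y X) (upperPt a) (upperPt b) := by
  rw [← isDNPair_image_iff (LinearIsometryEquiv.neg ℝ), image_neg_circleConfig]
  simp [neg_lowerPt]

end circleConfig

def nearDiagonal (p q : ℕ) : Finset (ℕ × ℕ) :=
  (range p ×ˢ range q).filter fun x => x.1 ≤ x.2 + 1 ∧ x.2 ≤ x.1 + 1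

theorem card_nearDiagonal_self (q : ℕ) : (nearDiagonal (q + 1) (q + 1)).card = 3 * q + 1 := by
  induction q with
  | zero => decide
  | succ q ih =>
    have h : nearDiagonal (q + 2) (q + 2) = insert (q + 1, q + 1)
        (insert (q, q + 1) (insert (q + 1, q) (nearDiagonal (q + 1) (q + 1)))) := by
      ext ⟨a, b⟩
      simp only [nearDiagonal, mem_filter, mem_product, mem_range, mem_insert, Prod.mk.injEq]
      omega
    rw [h, card_insert_of_notMem, card_insert_of_notMem, card_insert_of_notMem, ih] <;>
      simp [nearDiagonal]
    omega

theorem card_nearDiagonal_succ_self (q : ℕ) :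
    (nearDiagonal (q + 2) (q + 1)).card = 3 * q + 2 := by
  have h : nearDiagonal (q + 2) (q + 1) = insert (q + 1, q) (nearDiagonal (q + 1) (q + 1)) := by
    ext ⟨a, b⟩
    simp only [nearDiagonal, mem_filter, mem_product, mem_range, mem_insert, Prod.mk.injEq]
    omega
  rw [h, card_insert_of_notMem (by simp [nearDiagonal]), card_nearDiagonal_self]

section range

variable (p q : ℕ)

theorem card_filter_isDNPair_upperPt_upperPt :
    ((range p ×ˢ range p).filter fun x =>
      IsDNPair (circleConfig (range p) (range q)) (upperPt x.1) (upperPt x.2)).card =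
        if q ≤ p ∧ 2 ≤ p then 2 else 0 := by
  have hDN {a b : ℕ} (ha : a < p) :
      IsDNPair (circleConfig (range p) (range q)) (upperPt a) (upperPt b) ↔
        b < p ∧ a ≠ b ∧ min a b = 0 ∧ max p q ≤ max a b + 1 := by
    rw [isDNPair_upperPt_upperPt, forall_mem_range_union_range,
      forall_lt_le_and_le_iff (by omega)]
    simp only [mem_range, ha, true_and]
  split_ifs with h
  · refine (congrArg card (?_ : _ = ({(0, p - 1), (p - 1, 0)} : Finset (ℕ × ℕ)))).trans
      (card_pair (by simp; omega))
    ext ⟨a, b⟩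
    simp only [mem_filter, mem_product, mem_range, mem_insert, mem_singleton, Prod.mk.injEq]
    constructor
    · rintro ⟨⟨ha, -⟩, hab⟩
      rw [hDN ha] at hab
      omega
    · intro hab
      rw [hDN (by omega)]
      omega
  · rw [card_eq_zero, filter_eq_empty_iff]
    rintro ⟨a, b⟩ hab
    simp only [mem_product, mem_range] at hab
    rw [hDN hab.1]
    omega

theorem card_filter_isDNPair_lowerPt_lowerPt :
    ((range q ×ˢ range q).filter fun x =>
      IsDNPair (circleConfig (range p) (range q)) (lowerPt x.1) (lowerPt x.2)).card =
        if p ≤ q ∧ 2 ≤ q then 2 else 0 := by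
  simp only [isDNPair_lowerPt_lowerPt]
  exact card_filter_isDNPair_upperPt_upperPt q p

theorem filter_isDNPair_upperPt_lowerPt :
    ((range p ×ˢ range q).filter fun x =>
      IsDNPair (circleConfig (range p) (range q)) (upperPt x.1) (lowerPt x.2)) =
        nearDiagonal p q := by
  refine filter_congr fun x hx => ?_
  simp only [mem_product, mem_range] at hx
  rw [isDNPair_upperPt_lowerPt, forall_mem_range_union_range,
    forall_lt_le_or_le_iff (by omega)]
  simp only [mem_range, hx, true_and]
  omega

theorem numDN_circleConfig_range (hqp : q ≤ p) (hpq : p ≤ q + 1) (h : 3 ≤ p + q) :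
    numDN (circleConfig (range p) (range q)) = 3 * q := by
  unfold numDN
  rw [card_filter_product_of_eq_union (P := IsDNPair _) (circleConfig.eq_1 _ _)
      disjoint_image_upperPt_image_lowerPt fun _ _ => isDNPair_comm.1,
    card_filter_image_product upperPt_natCast_injective.injOn upperPt_natCast_injective.injOn,
    card_filter_image_product lowerPt_natCast_injective.injOn lowerPt_natCast_injective.injOn,
    card_filter_image_product upperPt_natCast_injective.injOn lowerPt_natCast_injective.injOn,
    card_filter_isDNPair_upperPt_upperPt, card_filter_isDNPair_lowerPt_lowerPt,
    filter_isDNPair_upperPt_lowerPt]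
  obtain ⟨q, rfl⟩ : ∃ r, q = r + 1 := ⟨q - 1, by omega⟩
  obtain rfl | rfl : p = q + 1 ∨ p = q + 2 := by omega
  · rw [card_nearDiagonal_self]
    split_ifs <;> omega
  · rw [card_nearDiagonal_succ_self]
    split_ifs <;> omega

end range

/-- For every `n ≥ 3` there is a set of `n` points in the plane with exactly
`3⌊n/2⌋` double-normal pairs. -/
theorem doubleNormal_plane_bound_attained (n : ℕ) (hn : 3 ≤ n) :
    ∃ V : Finset (Euc 2), V.card = n ∧ numDN V = 3 * (n / 2) := by
  refine ⟨circleConfig (range (n - n / 2)) (range (n / 2)), ?_, ?_⟩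
  · rw [card_circleConfig, card_range, card_range]
    omega
  · exact numDN_circleConfig_range _ _ (by omega) (by omega) (by omega)
end
end

section
/- Let V be a finite set of points in the Euclidean plane ℝ², and let {p,q} and {r,s} be double-normal pairs of V such that the closed segments [p,q] and [r,s] are disjoint. Then p, q, r, s form a rectangle with pq and rs as opposite sides: either q − p = s − r and ⟨q − p, r − p⟩ = 0, or q − p = r − s and ⟨q − p, s − p⟩ = 0. -/
open scoped RealInnerProductSpace Classical

noncomputable section

/-!
Write `u = q - p` and `w = s - r`. Being double normals, each pair lies in the closed strip of the
other. If `u` and `w` are linearly independent, they span the plane, so the lines `pq` and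
`rs` meet in a point `p + a • u = r - b • w`; multiplying by the Gram determinant
`‖u‖²‖w‖² - ⟪u, w⟫²` turns the strip conditions into `a, -b ∈ [0, 1]`, so the segments meet.
Otherwise `w = c • u`, and the strip conditions force `c = ±1` with `r` or `s` on the normal
line through `p`, which is the rectangle.
-/

open Set Module

variable {E : Type*} [NormedAddCommGroup E] [InnerProductSpace ℝ E]

def closedStrip (p q : E) : Set E := {v | ⟪v - p, q - p⟫ ∈ Icc 0 (‖q - p‖ ^ 2)}

lemma mem_closedStrip {p q v : E} : v ∈ closedStrip p q ↔ ⟪v - p, q - p⟫ ∈ Icc 0 (‖q - p‖ ^ 2) :=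
  Iff.rfl

lemma IsDNPair.mem_closedStrip {d : ℕ} {V : Finset (Euc d)} {p q v : Euc d}
    (h : IsDNPair V p q) (hv : v ∈ V) : v ∈ closedStrip p q := by
  obtain ⟨h₀, h₁⟩ := h.2.2.2 v hv
  have : ⟪v - q, p - q⟫ = ‖q - p‖ ^ 2 - ⟪v - p, q - p⟫ := by
    rw [show v - q = (v - p) - (q - p) by abel, show p - q = -(q - p) by abel, inner_neg_right,
      inner_sub_left, real_inner_self_eq_norm_sq]
    ring
  exact ⟨h₀, by linarith⟩

lemma exists_smul_add_smul_eq_of_finrank_eq_two {K V : Type*} [DivisionRing K] [AddCommGroup V]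
    [Module K V] (hV : finrank K V = 2) {x y : V} (h : LinearIndependent K ![x, y]) (z : V) :
    ∃ a b : K, a • x + b • y = z := by
  have hspan := h.span_eq_top_of_card_eq_finrank (by simp [hV])
  rw [Matrix.range_cons_cons_empty] at hspan
  exact Submodule.mem_span_pair.1 (hspan ▸ Submodule.mem_top)

lemma LinearIndependent.inner_sq_lt_norm_sq_mul_norm_sq {u w : E}
    (h : LinearIndependent ℝ ![u, w]) : ⟪u, w⟫ ^ 2 < ‖u‖ ^ 2 * ‖w‖ ^ 2 := by
  have hW : 0 < ‖w‖ ^ 2 := pow_pos (norm_pos_iff.2 (by simpa using h.ne_zero 1)) 2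
  have hne : ‖w‖ ^ 2 • u + (-⟪u, w⟫) • w ≠ 0 := fun h0 =>
    hW.ne' (LinearIndependent.pair_iff.1 h _ _ h0).1
  -- the component of `‖w‖² • u` orthogonal to `w`
  have hnorm :
      ‖‖w‖ ^ 2 • u + (-⟪u, w⟫) • w‖ ^ 2 = ‖w‖ ^ 2 * (‖u‖ ^ 2 * ‖w‖ ^ 2 - ⟪u, w⟫ ^ 2) := by
    rw [← real_inner_self_eq_norm_sq]
    simp only [inner_add_left, inner_add_right, real_inner_smul_left, real_inner_smul_right]
    rw [real_inner_self_eq_norm_sq, real_inner_self_eq_norm_sq, real_inner_comm w u]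
    ring
  have := hnorm ▸ pow_pos (norm_pos_iff.2 hne) 2
  nlinarith

lemma mul_add_mul_mem_Icc_of_mem_Icc {U W k g m : ℝ} (hg : g ∈ Icc 0 U) (hgk : g + k ∈ Icc 0 U)
    (hm : m ∈ Icc 0 W) (hmk : m + k ∈ Icc 0 W) : W * g + k * m ∈ Icc 0 (U * W - k ^ 2) := by
  obtain ⟨hg₀, hg₁⟩ := hg
  obtain ⟨hgk₀, hgk₁⟩ := hgk
  obtain ⟨hm₀, hm₁⟩ := hm
  obtain ⟨hmk₀, hmk₁⟩ := hmk
  have hW : 0 ≤ W := hm₀.trans hm₁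
  rcases le_total 0 k with hk | hk
  · exact ⟨by nlinarith [mul_nonneg hW hg₀, mul_nonneg hk hm₀],
      by nlinarith [mul_nonneg hW (sub_nonneg.2 hgk₁), mul_nonneg hk (sub_nonneg.2 hmk₁)]⟩
  · exact ⟨by nlinarith [mul_nonneg hW hgk₀, mul_nonneg (neg_nonneg.2 hk) (sub_nonneg.2 hm₁)],
      by nlinarith [mul_nonneg hW (sub_nonneg.2 hg₁), mul_nonneg (neg_nonneg.2 hk) hmk₀]⟩

lemma eq_one_and_eq_zero_or_eq_neg_one_and_eq {U g c : ℝ} (hU : 0 < U) (hc : c ≠ 0)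
    (hg : g ∈ Icc 0 U) (hgc : g + c * U ∈ Icc 0 U) (hcg : -(c * g) ∈ Icc 0 (c ^ 2 * U))
    (hcUg : c * (U - g) ∈ Icc 0 (c ^ 2 * U)) : (c = 1 ∧ g = 0) ∨ (c = -1 ∧ g = U) := by
  rcases hc.lt_or_gt with hc | hc
  · have hgU : g = U := le_antisymm hg.2 (by nlinarith [hcUg.1])
    subst hgU
    refine Or.inr ⟨le_antisymm ?_ (by nlinarith [hgc.1]), rfl⟩
    nlinarith [hcg.2, mul_pos (neg_pos.2 hc) hU]
  · have hg0 : g = 0 := le_antisymm (by nlinarith [hcg.1]) hg.1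
    subst hg0
    refine Or.inl ⟨le_antisymm (by nlinarith [hgc.2]) ?_, rfl⟩
    nlinarith [hcUg.2, mul_pos hc hU]

lemma rectangle_of_smul_eq_of_mem_closedStrip {p q r s : E} {c : ℝ} (hpq : p ≠ q) (hrs : r ≠ s)
    (hc : c • (q - p) = s - r) (hr : r ∈ closedStrip p q) (hs : s ∈ closedStrip p q)
    (hp : p ∈ closedStrip r s) (hq : q ∈ closedStrip r s) :
    (q - p = s - r ∧ ⟪q - p, r - p⟫ = 0) ∨ (q - p = r - s ∧ ⟪q - p, s - p⟫ = 0) := by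
  have hU : 0 < ‖q - p‖ ^ 2 := pow_pos (norm_pos_iff.2 (sub_ne_zero.2 hpq.symm)) 2
  have hc0 : c ≠ 0 := by
    rintro rfl
    exact hrs (sub_eq_zero.1 (by simpa using hc.symm)).symm
  have hsp : s - p = (r - p) + c • (q - p) := by rw [hc]; abel
  have hqr : q - r = (q - p) - (r - p) := by abel
  simp only [mem_closedStrip, ← hc, norm_smul, mul_pow, Real.norm_eq_abs, sq_abs,
    real_inner_smul_right] at hr hs hp hq
  rw [hsp, inner_add_left, real_inner_smul_left, real_inner_self_eq_norm_sq] at hs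
  rw [← neg_sub r p, inner_neg_left, mul_neg] at hp
  rw [hqr, inner_sub_left, real_inner_self_eq_norm_sq] at hq
  rcases eq_one_and_eq_zero_or_eq_neg_one_and_eq hU hc0 hr hs hp hq with ⟨rfl, hg⟩ | ⟨rfl, hg⟩
  · left
    rw [← hc, one_smul, real_inner_comm, hg]
    exact ⟨rfl, rfl⟩
  · right
    rw [hsp, inner_add_right, real_inner_smul_right, real_inner_comm, hg,
      real_inner_self_eq_norm_sq, ← neg_sub s r, ← hc]
    exact ⟨by simp, by ring⟩

lemma segment_inter_nonempty_of_mem_closedStrip (hE : finrank ℝ E = 2) {p q r s : E}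
    (hind : LinearIndependent ℝ ![q - p, s - r]) (hr : r ∈ closedStrip p q)
    (hs : s ∈ closedStrip p q) (hp : p ∈ closedStrip r s) (hq : q ∈ closedStrip r s) :
    (segment ℝ p q ∩ segment ℝ r s).Nonempty := by
  rw [mem_closedStrip] at hr hs hp hq
  rw [← sub_add_sub_cancel s r p, inner_add_left, add_comm, real_inner_comm (q - p) (s - r)] at hs
  rw [← sub_add_sub_cancel q p r, inner_add_left, add_comm] at hq
  obtain ⟨a, b, hab⟩ := exists_smul_add_smul_eq_of_finrank_eq_two hE hind (r - p)
  set G := ‖q - p‖ ^ 2 * ‖s - r‖ ^ 2 - ⟪q - p, s - r⟫ ^ 2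
  have hG : 0 < G := sub_pos.2 hind.inner_sq_lt_norm_sq_mul_norm_sq
  have of_mul_mem_Icc : ∀ t : ℝ, t * G ∈ Icc 0 G → t ∈ Icc 0 1 := fun t ht =>
    ⟨nonneg_of_mul_nonneg_left ht.1 hG, (mul_le_iff_le_one_left hG).1 ht.2⟩
  have hg : ⟪r - p, q - p⟫ = a * ‖q - p‖ ^ 2 + b * ⟪q - p, s - r⟫ := by
    rw [← hab, inner_add_left, real_inner_smul_left, real_inner_smul_left,
      real_inner_self_eq_norm_sq, real_inner_comm]
  have hm : ⟪p - r, s - r⟫ = -(a * ⟪q - p, s - r⟫ + b * ‖s - r‖ ^ 2) := by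
    rw [← neg_sub r p, inner_neg_left, ← hab, inner_add_left, real_inner_smul_left,
      real_inner_smul_left, real_inner_self_eq_norm_sq]
  have ha := mul_add_mul_mem_Icc_of_mem_Icc hr hs hp hq
  have hb := mul_add_mul_mem_Icc_of_mem_Icc hp hq hr hs
  rw [hg, hm] at ha hb
  have ha' := of_mul_mem_Icc a (by convert ha using 1; ring)
  have hb' := of_mul_mem_Icc (-b) (by convert hb using 2 <;> ring)
  refine ⟨p + a • (q - p), ?_, ?_⟩
  · rw [segment_eq_image']
    exact ⟨a, ha', rfl⟩
  · rw [segment_eq_image']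
    refine ⟨-b, hb', ?_⟩
    beta_reduce
    linear_combination (norm := module) -hab

/-- Two disjoint double-normal pairs in the plane are opposite sides of a rectangle. -/
theorem doubleNormal_disjoint_rectangle (V : Finset (Euc 2)) (p q r s : Euc 2)
    (hpq : IsDNPair V p q) (hrs : IsDNPair V r s)
    (hdisj : Disjoint (segment ℝ p q) (segment ℝ r s)) :
    (q - p = s - r ∧ ⟪q - p, r - p⟫ = 0) ∨
      (q - p = r - s ∧ ⟪q - p, s - p⟫ = 0) := by
  have hr := hpq.mem_closedStrip hrs.1
  have hs := hpq.mem_closedStrip hrs.2.1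
  have hp := hrs.mem_closedStrip hpq.1
  have hq := hrs.mem_closedStrip hpq.2.1
  by_cases hind : LinearIndependent ℝ ![q - p, s - r]
  · have hmeet :=
      segment_inter_nonempty_of_mem_closedStrip finrank_euclideanSpace_fin hind hr hs hp hq
    exact absurd hdisj.inter_eq hmeet.ne_empty
  · obtain ⟨c, hc⟩ : ∃ c : ℝ, c • (q - p) = s - r := by
      simpa using (LinearIndependent.pair_iff' (sub_ne_zero.2 hpq.2.2.1.symm)).not.1 hind
    exact rectangle_of_smul_eq_of_mem_closedStrip hpq.2.2.1 hrs.2.2.1 hc hr hs hp hq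
end
end

section
/- Let V be a finite set of points in the Euclidean plane ℝ² and let p ∈ V. Then p does not lie in the convex hull of the set {q ∈ V : {p,q} is a double-normal pair of V} of double-normal neighbours of p. -/
open scoped RealInnerProductSpace Classical

noncomputable section

/-- No vertex lies in the convex hull of its double-normal neighbours. -/
theorem doubleNormal_not_mem_convexHull_neighbours (V : Finset (Euc 2)) (p : Euc 2)
    (hp : p ∈ V) :
    p ∉ convexHull ℝ {q : Euc 2 | IsDNPair V p q} := by
  intro h
  rw [convexHull_eq] at h
  obtain ⟨ι, t, w, z, hw, hw1, hz, hc⟩ := h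
  rw [Finset.centerMass_eq_of_sum_1 _ _ hw1] at hc
  -- pick an index with positive weight
  have ht : ∃ i ∈ t, 0 < w i := by
    by_contra hcon
    push_neg at hcon
    have : ∑ i ∈ t, w i = 0 :=
      Finset.sum_eq_zero fun i hi => le_antisymm (hcon i hi) (hw i hi)
    rw [hw1] at this; exact one_ne_zero this
  obtain ⟨i, hi, hwi⟩ := ht
  have hzero : ∑ j ∈ t, w j • (z j - p) = 0 := by
    have : ∑ j ∈ t, w j • (z j - p) = (∑ j ∈ t, w j • z j) - (∑ j ∈ t, w j) • p := by
      rw [Finset.sum_smul]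
      rw [← Finset.sum_sub_distrib]
      congr 1; ext j; rw [smul_sub]
    rw [this, hw1, hc, one_smul, sub_self]
  have hinner : ∑ j ∈ t, w j * ⟪z j - p, z i - p⟫ = 0 := by
    have h0 : ⟪∑ j ∈ t, w j • (z j - p), z i - p⟫ = 0 := by
      rw [hzero, inner_zero_left]
    rw [sum_inner] at h0
    simp only [real_inner_smul_left] at h0
    exact h0
  have hpos : 0 < ∑ j ∈ t, w j * ⟪z j - p, z i - p⟫ := by
    apply Finset.sum_pos'
    · intro j hj
      have hdn : IsDNPair V p (z i) := hz i hi
      have hzjV : z j ∈ V := (hz j hj).2.1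
      have := (hdn.2.2.2 (z j) hzjV).1
      exact mul_nonneg (hw j hj) this
    · refine ⟨i, hi, ?_⟩
      have hdn : IsDNPair V p (z i) := hz i hi
      have hne : z i - p ≠ 0 := sub_ne_zero.mpr (Ne.symm hdn.2.2.1)
      have : 0 < ⟪z i - p, z i - p⟫ := by
        rw [real_inner_self_eq_norm_sq]
        exact pow_pos (norm_pos_iff.mpr hne) 2
      exact mul_pos hwi this
  exact absurd hinner (ne_of_gt hpos)
end
end

section
/- Let V ⊆ S² be finite, and let {a,b} and {c,d} be two edges of the weak Gabriel graph of V with {a,b} ≠ {c,d}. If some point s ∈ S² lies in the relative interior of the minor great-circular arc with endpoints a, b and also in the relative interior of the minor great-circular arc with endpoints c, d, then the two arcs have the same spherical length and the same spherical midpoint, and s equals this common midpoint: ⟨a,b⟩ = ⟨c,d⟩ and s = (a+b)/‖a+b‖ = (c+d)/‖c+d‖. -/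
open scoped RealInnerProductSpace Classical

noncomputable section

/-- `{a, b}` is an edge of the weak Gabriel graph of `V ⊆ S²`: `a` and `b` are distinct,
non-antipodal, and no point of `V` lies in the open minor spherical cap with diameter `ab`. -/
def IsWeakGabrielEdge (V : Finset (Euc 3)) (a b : Euc 3) : Prop :=
  a ∈ V ∧ b ∈ V ∧ a ≠ b ∧ b ≠ -a ∧ ∀ v ∈ V, 0 ≤ ⟪v - a, v - b⟫

/-- The number of edges of the weak Gabriel graph of `V`. -/
def numWeakGabriel (V : Finset (Euc 3)) : ℕ :=
  ((V ×ˢ V).filter fun pq => IsWeakGabrielEdge V pq.1 pq.2).card / 2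

/-- `{a, b}` is an edge of the strict Gabriel graph of `V ⊆ S²`: `a` and `b` are distinct,
non-antipodal, and no point of `V \ {a, b}` lies in the closed minor spherical cap with
diameter `ab`. -/
def IsStrictGabrielEdge (V : Finset (Euc 3)) (a b : Euc 3) : Prop :=
  a ∈ V ∧ b ∈ V ∧ a ≠ b ∧ b ≠ -a ∧ ∀ v ∈ V, v ≠ a → v ≠ b → 0 < ⟪v - a, v - b⟫

/-- The relative interior of the minor great-circular arc with endpoints `a`, `b`. -/
def arcInterior (a b : Euc 3) : Set (Euc 3) :=
  {x | ∃ lam mu : ℝ, 0 < lam ∧ 0 < mu ∧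
    x = (‖lam • a + mu • b‖)⁻¹ • (lam • a + mu • b)}

/-! On the unit sphere the cap condition of an edge `ab` says that
`⟪v, a + b⟫ ≤ ⟪a, a + b⟫ = ⟪b, a + b⟫` for all `v ∈ V`: the functional `⟪·, a + b⟫` attains its
maximum over `V` at `a` and `b`. Write a multiple of the crossing point as
`α a + β b = γ c + δ d` with positive coefficients. Evaluating `⟪·, a + b⟫` gives
`α + β ≤ γ + δ`, evaluating `⟪·, c + d⟫` the reverse, so `c, d` also maximise `⟪·, a + b⟫` and
`a, b` maximise `⟪·, c + d⟫`; this forces `a + b = c + d`. Then `ab` and `cd` are two diameters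
of the same circle, with centre `(a + b) / 2`; the crossing point lies on both, so unless they
coincide it is the centre, i.e. `α = β`. -/

section InnerProductSpace

variable {E : Type*} [NormedAddCommGroup E] [InnerProductSpace ℝ E] {a b c d : E} {α β γ δ : ℝ}

theorem inner_add_le_of_inner_sub_sub_nonneg {v : E} (hv : ‖v‖ = ‖a‖)
    (h : 0 ≤ ⟪v - a, v - b⟫) : ⟪v, a + b⟫ ≤ ⟪a, a + b⟫ := by
  have hvv := real_inner_self_eq_norm_sq v
  have haa := real_inner_self_eq_norm_sq a
  rw [hv] at hvv
  simp only [inner_sub_left, inner_sub_right, inner_add_right, real_inner_comm v a] at h ⊢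
  linarith

theorem inner_add_eq_of_norm_eq (h : ‖b‖ = ‖a‖) : ⟪b, a + b⟫ = ⟪a, a + b⟫ := by
  rw [inner_add_right, inner_add_right, real_inner_self_eq_norm_sq, real_inner_self_eq_norm_sq, h,
    real_inner_comm]
  ring

theorem two_mul_inner_add_eq_norm_add_sq (h : ‖b‖ = ‖a‖) : 2 * ⟪a, a + b⟫ = ‖a + b‖ ^ 2 := by
  rw [← real_inner_self_eq_norm_sq, inner_add_left _ _ (a + b), inner_add_eq_of_norm_eq h]
  ring

theorem inner_add_pos_of_norm_eq (h : ‖b‖ = ‖a‖) (hab : a + b ≠ 0) : 0 < ⟪a, a + b⟫ := by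
  have := two_mul_inner_add_eq_norm_add_sq h
  have := norm_pos_iff.2 hab
  nlinarith

theorem inner_eq_inner_of_add_eq_add (hb : ‖b‖ = ‖a‖) (hc : ‖c‖ = ‖a‖) (hd : ‖d‖ = ‖a‖)
    (h : a + b = c + d) : ⟪a, b⟫ = ⟪c, d⟫ := by
  have hab := norm_add_sq_real a b
  have hcd := norm_add_sq_real c d
  rw [h, hb] at hab
  rw [hc, hd] at hcd
  linarith

theorem norm_sub_eq_norm_sub_of_add_eq_add (hb : ‖b‖ = ‖a‖) (hc : ‖c‖ = ‖a‖) (hd : ‖d‖ = ‖a‖)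
    (h : a + b = c + d) : ‖a - b‖ = ‖c - d‖ := by
  have hab := norm_sub_sq_real a b
  have hcd := norm_sub_sq_real c d
  rw [hb] at hab
  rw [hc, hd] at hcd
  rw [← sq_eq_sq₀ (norm_nonneg _) (norm_nonneg _), hab, hcd,
    inner_eq_inner_of_add_eq_add hb hc hd h]

theorem eq_of_inner_eq_norm_sq {x y : E} (hx : ⟪x, y⟫ = ‖x‖ ^ 2) (hy : ⟪x, y⟫ = ‖y‖ ^ 2) :
    x = y := by
  rw [← sub_eq_zero, ← norm_eq_zero, ← sq_eq_zero_iff, norm_sub_sq_real]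
  linarith

section Functional

variable {u : E}

theorem inner_smul_add_smul_of_inner_eq (hb : ⟪b, u⟫ = ⟪a, u⟫) :
    ⟪α • a + β • b, u⟫ = (α + β) * ⟪a, u⟫ := by
  rw [inner_add_left, real_inner_smul_left, real_inner_smul_left, hb]
  ring

theorem add_le_add_of_inner_le (hb : ⟪b, u⟫ = ⟪a, u⟫) (hu : 0 < ⟪a, u⟫)
    (hc : ⟪c, u⟫ ≤ ⟪a, u⟫) (hd : ⟪d, u⟫ ≤ ⟪a, u⟫) (hγ : 0 ≤ γ) (hδ : 0 ≤ δ)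
    (hp : α • a + β • b = γ • c + δ • d) : α + β ≤ γ + δ := by
  have key : (α + β) * ⟪a, u⟫ = γ * ⟪c, u⟫ + δ * ⟪d, u⟫ := by
    rw [← inner_smul_add_smul_of_inner_eq hb, hp, inner_add_left, real_inner_smul_left,
      real_inner_smul_left]
  refine le_of_mul_le_mul_right ?_ hu
  nlinarith [mul_le_mul_of_nonneg_left hc hγ, mul_le_mul_of_nonneg_left hd hδ]

theorem inner_eq_of_add_eq_add (hb : ⟪b, u⟫ = ⟪a, u⟫)
    (hc : ⟪c, u⟫ ≤ ⟪a, u⟫) (hd : ⟪d, u⟫ ≤ ⟪a, u⟫) (hγ : 0 < γ) (hδ : 0 < δ)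
    (hp : α • a + β • b = γ • c + δ • d) (hsum : α + β = γ + δ) :
    ⟪c, u⟫ = ⟪a, u⟫ ∧ ⟪d, u⟫ = ⟪a, u⟫ := by
  have key : (γ + δ) * ⟪a, u⟫ = γ * ⟪c, u⟫ + δ * ⟪d, u⟫ := by
    rw [← hsum, ← inner_smul_add_smul_of_inner_eq hb, hp, inner_add_left, real_inner_smul_left,
      real_inner_smul_left]
  constructor <;> nlinarith [mul_le_mul_of_nonneg_left hc hγ.le, mul_le_mul_of_nonneg_left hd hδ.le]

end Functional

theorem pair_eq_of_smul_sub_eq (hsum : a + b = c + d) (hnorm : ‖a - b‖ = ‖c - d‖) {t t' : ℝ}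
    (ht : t ≠ 0) (h : t • (a - b) = t' • (c - d)) : ({a, b} : Set E) = {c, d} := by
  have hsub : a - b = c - d ∨ a - b = -(c - d) := by
    rcases eq_or_ne (c - d) 0 with hcd | hcd
    · rw [hcd, smul_zero, smul_eq_zero] at h
      exact .inl ((h.resolve_left ht).trans hcd.symm)
    have habs : |t| = |t'| := by
      have := congrArg norm h
      rw [norm_smul, norm_smul, Real.norm_eq_abs, Real.norm_eq_abs, hnorm] at this
      exact mul_right_cancel₀ (norm_ne_zero_iff.2 hcd) this
    rcases abs_eq_abs.1 habs with rfl | rfl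
    · exact .inl (smul_right_injective E ht h)
    · exact .inr (smul_right_injective E ht (by simpa only [neg_smul_neg] using h))
  rcases hsub with hsub | hsub
  · obtain rfl : a = c := by linear_combination (norm := module) (2⁻¹ : ℝ) • (hsum + hsub)
    obtain rfl : b = d := by linear_combination (norm := module) (2⁻¹ : ℝ) • (hsum - hsub)
    rfl
  · obtain rfl : a = d := by linear_combination (norm := module) (2⁻¹ : ℝ) • (hsum + hsub)
    obtain rfl : b = c := by linear_combination (norm := module) (2⁻¹ : ℝ) • (hsum - hsub)
    exact Set.pair_comm _ _

theorem eq_of_smul_add_smul_eq_of_pair_ne (hsum : a + b = c + d) (hnorm : ‖a - b‖ = ‖c - d‖)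
    (hcoef : α + β = γ + δ) (hp : α • a + β • b = γ • c + δ • d)
    (hne : ({a, b} : Set E) ≠ {c, d}) : α = β := by
  by_contra h
  refine hne (pair_eq_of_smul_sub_eq hsum hnorm (sub_ne_zero.2 h) (t' := γ - δ) ?_)
  calc (α - β) • (a - b) = (2 : ℝ) • (α • a + β • b) - (α + β) • (a + b) := by module
    _ = (2 : ℝ) • (γ • c + δ • d) - (γ + δ) • (c + d) := by rw [hp, hcoef, hsum]
    _ = (γ - δ) • (c - d) := by module

end InnerProductSpace

theorem exists_smul_add_smul_eq_of_mem_arcInterior {a b c d s : Euc 3}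
    (hs₁ : s ∈ arcInterior a b) (hs₂ : s ∈ arcInterior c d) :
    ∃ α β γ δ : ℝ, 0 < α ∧ 0 < β ∧ 0 < γ ∧ 0 < δ ∧ α • a + β • b = γ • c + δ • d ∧
      s = ‖α • a + β • b‖⁻¹ • (α • a + β • b) := by
  obtain ⟨α, β, hα, hβ, rfl⟩ := hs₁
  obtain ⟨γ, δ, hγ, hδ, hs⟩ := hs₂
  by_cases hp : α • a + β • b = 0
  · rw [hp, smul_zero] at hs
    have hq : γ • c + δ • d = 0 := (NormedSpace.normalize_eq_zero_iff _).1 hs.symm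
    exact ⟨α, β, γ, δ, hα, hβ, hγ, hδ, hp.trans hq.symm, rfl⟩
  have hq : γ • c + δ • d ≠ 0 := by
    rintro hq
    rw [hq, smul_zero] at hs
    exact hp ((NormedSpace.normalize_eq_zero_iff _).1 hs)
  obtain ⟨r₁, r₂, hr₁, hr₂, h⟩ :=
    ((sameRay_iff_inv_norm_smul_eq_of_ne hp hq).2 hs).exists_pos hp hq
  refine ⟨r₁ * α, r₁ * β, r₂ * γ, r₂ * δ, by positivity, by positivity, by positivity,
    by positivity, by simpa only [smul_add, smul_smul] using h, ?_⟩
  simp only [mul_smul, ← smul_add]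
  exact (NormedSpace.normalize_smul_of_pos hr₁ _).symm

theorem IsWeakGabrielEdge.add_eq_add_of_smul_add_smul_eq {V : Finset (Euc 3)} {a b c d : Euc 3}
    {α β γ δ : ℝ} (hV : ∀ v ∈ V, ‖v‖ = 1) (hab : IsWeakGabrielEdge V a b)
    (hcd : IsWeakGabrielEdge V c d) (hα : 0 < α) (hβ : 0 < β) (hγ : 0 < γ) (hδ : 0 < δ)
    (hp : α • a + β • b = γ • c + δ • d) : a + b = c + d ∧ α + β = γ + δ := by
  obtain ⟨ha, hb, -, hba, hcap_ab⟩ := hab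
  obtain ⟨hc, hd, -, hdc, hcap_cd⟩ := hcd
  have hn : ∀ v ∈ V, ∀ w ∈ V, ‖v‖ = ‖w‖ := fun v hv w hw => (hV v hv).trans (hV w hw).symm
  have hab₀ : a + b ≠ 0 := fun h => hba (eq_neg_of_add_eq_zero_right h)
  have hcd₀ : c + d ≠ 0 := fun h => hdc (eq_neg_of_add_eq_zero_right h)
  have hca := inner_add_le_of_inner_sub_sub_nonneg (hn c hc a ha) (hcap_ab c hc)
  have hda := inner_add_le_of_inner_sub_sub_nonneg (hn d hd a ha) (hcap_ab d hd)
  have hac := inner_add_le_of_inner_sub_sub_nonneg (hn a ha c hc) (hcap_cd a ha)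
  have hbc := inner_add_le_of_inner_sub_sub_nonneg (hn b hb c hc) (hcap_cd b hb)
  have hba' := inner_add_eq_of_norm_eq (hn b hb a ha)
  have hdc' := inner_add_eq_of_norm_eq (hn d hd c hc)
  have hab_pos := inner_add_pos_of_norm_eq (hn b hb a ha) hab₀
  have hcd_pos := inner_add_pos_of_norm_eq (hn d hd c hc) hcd₀
  have hsum : α + β = γ + δ := le_antisymm
    (add_le_add_of_inner_le hba' hab_pos hca hda hγ.le hδ.le hp)
    (add_le_add_of_inner_le hdc' hcd_pos hac hbc hα.le hβ.le hp.symm)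
  obtain ⟨hca', hda'⟩ := inner_eq_of_add_eq_add hba' hca hda hγ hδ hp hsum
  obtain ⟨hac', hbc'⟩ := inner_eq_of_add_eq_add hdc' hac hbc hα hβ hp.symm hsum.symm
  refine ⟨eq_of_inner_eq_norm_sq ?_ ?_, hsum⟩
  · rw [real_inner_comm, inner_add_left, hca', hda', ← two_mul,
      two_mul_inner_add_eq_norm_add_sq (hn b hb a ha)]
  · rw [inner_add_left, hac', hbc', ← two_mul, two_mul_inner_add_eq_norm_add_sq (hn d hd c hc)]

/-- Two crossing edges of the weak Gabriel graph on `S²` have the same spherical length and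
the same spherical midpoint, which is the crossing point. -/
theorem weakGabriel_crossing (V : Finset (Euc 3)) (hV : ∀ v ∈ V, ‖v‖ = 1)
    (a b c d : Euc 3) (hab : IsWeakGabrielEdge V a b) (hcd : IsWeakGabrielEdge V c d)
    (hne : ({a, b} : Set (Euc 3)) ≠ {c, d}) (s : Euc 3)
    (hs₁ : s ∈ arcInterior a b) (hs₂ : s ∈ arcInterior c d) :
    ⟪a, b⟫ = ⟪c, d⟫ ∧ s = (‖a + b‖)⁻¹ • (a + b) ∧ s = (‖c + d‖)⁻¹ • (c + d) := by
  obtain ⟨α, β, γ, δ, hα, hβ, hγ, hδ, hp, rfl⟩ := exists_smul_add_smul_eq_of_mem_arcInterior hs₁ hs₂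
  obtain ⟨hsum, hcoef⟩ := hab.add_eq_add_of_smul_add_smul_eq hV hcd hα hβ hγ hδ hp
  have hn : ∀ v ∈ V, ‖v‖ = ‖a‖ := fun v hv => (hV v hv).trans (hV a hab.1).symm
  have hb := hn b hab.2.1
  have hc := hn c hcd.1
  have hd := hn d hcd.2.1
  have hαβ : α = β := eq_of_smul_add_smul_eq_of_pair_ne hsum
    (norm_sub_eq_norm_sub_of_add_eq_add hb hc hd hsum) hcoef hp hne
  have hmid : ‖α • a + β • b‖⁻¹ • (α • a + β • b) = ‖a + b‖⁻¹ • (a + b) := by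
    rw [hαβ, ← smul_add]
    exact NormedSpace.normalize_smul_of_pos hβ _
  exact ⟨inner_eq_inner_of_add_eq_add hb hc hd hsum, hmid, hsum ▸ hmid⟩
end
end

section
/- Let V ⊆ S² be finite, and let {a,b} and {c,d} be two edges of the strict Gabriel graph of V with {a,b} ≠ {c,d}. Then no point of S² lies in the relative interior of both the minor great-circular arc with endpoints a, b and the minor great-circular arc with endpoints c, d; that is, the drawing of the strict Gabriel graph by minor great-circular arcs has no crossings. -/
open scoped RealInnerProductSpace Classical

noncomputable section

/-! For unit `x`, `⟪x - a, x - b⟫ = 1 + ⟪a, b⟫ - ⟪x, a + b⟫`, so if `{a, b}` is a strict Gabriel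
edge then `V` lies in the half-space `⟪·, a + b⟫ ≤ 1 + ⟪a, b⟫` and meets its boundary only at `a`
and `b`. A point `α a + β b` of the arc `ab` lies on the level `(α + β) (1 + ⟪a, b⟫)`, while a
positive combination `γ c + δ d` of points of `V` not both in `{a, b}` lies strictly below the level
`(γ + δ) (1 + ⟪a, b⟫)`. A common point of the two arcs thus gives `α + β < γ + δ`, and by symmetry
`γ + δ < α + β`. -/

section UnitVectors

variable {E : Type*} [NormedAddCommGroup E] [InnerProductSpace ℝ E]

theorem inner_sub_sub_eq_of_norm_eq_one {x : E} (hx : ‖x‖ = 1) (a b : E) :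
    ⟪x - a, x - b⟫ = 1 + ⟪a, b⟫ - ⟪x, a + b⟫ := by
  rw [inner_sub_left, inner_sub_right, inner_sub_right, real_inner_self_eq_norm_sq, hx,
    inner_add_right, real_inner_comm a x]
  ring

theorem inner_smul_add_smul_add_eq {a b : E} (ha : ‖a‖ = 1) (hb : ‖b‖ = 1) (α β : ℝ) :
    ⟪α • a + β • b, a + b⟫ = (α + β) * (1 + ⟪a, b⟫) := by
  rw [inner_add_left, real_inner_smul_left, real_inner_smul_left, inner_add_right,
    inner_add_right, real_inner_self_eq_norm_sq, real_inner_self_eq_norm_sq, ha, hb,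
    real_inner_comm b a]
  ring

theorem one_add_inner_pos_of_ne_neg {a b : E} (ha : ‖a‖ = 1) (hb : ‖b‖ = 1) (h : b ≠ -a) :
    0 < 1 + ⟪a, b⟫ := by
  have hab : a + b ≠ 0 := fun h0 => h (eq_neg_of_add_eq_zero_right h0)
  have := norm_add_sq_real a b
  rw [ha, hb] at this
  nlinarith [norm_pos_iff.mpr hab]

end UnitVectors

theorem Set.not_pair_subset_pair_of_ne {α : Type*} {a b c d : α} (hab : a ≠ b) (hcd : c ≠ d)
    (hne : ({a, b} : Set α) ≠ {c, d}) : ¬ ({c, d} : Set α) ⊆ {a, b} := fun h =>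
  hne (Set.eq_of_subset_of_ncard_le h (by rw [Set.ncard_pair hab, Set.ncard_pair hcd])
    (Set.toFinite _)).symm

theorem exists_pos_smul_add_smul_of_mem_arcInterior {a b s : Euc 3} (hs : s ≠ 0)
    (h : s ∈ arcInterior a b) : ∃ α β : ℝ, 0 < α ∧ 0 < β ∧ s = α • a + β • b := by
  obtain ⟨lam, mu, hlam, hmu, rfl⟩ := h
  have hr : 0 < ‖lam • a + mu • b‖⁻¹ :=
    lt_of_le_of_ne (by positivity) fun h0 => hs (by rw [← h0, zero_smul])
  exact ⟨_, _, mul_pos hr hlam, mul_pos hr hmu, by rw [smul_add, smul_smul, smul_smul]⟩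

namespace IsStrictGabrielEdge

variable {V : Finset (Euc 3)} {a b : Euc 3}

theorem inner_sub_sub_nonneg (hab : IsStrictGabrielEdge V a b) {x : Euc 3} (hx : x ∈ V) :
    0 ≤ ⟪x - a, x - b⟫ := by
  by_cases hxa : x = a
  · simp [hxa]
  by_cases hxb : x = b
  · simp [hxb]
  exact (hab.2.2.2.2 x hx hxa hxb).le

theorem add_lt_add_of_eq (hV : ∀ v ∈ V, ‖v‖ = 1) (hab : IsStrictGabrielEdge V a b)
    {c d : Euc 3} (hc : c ∈ V) (hd : d ∈ V) (hcd : ¬ ({c, d} : Set (Euc 3)) ⊆ {a, b})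
    {α β γ δ : ℝ} (hγ : 0 < γ) (hδ : 0 < δ) (h : α • a + β • b = γ • c + δ • d) :
    α + β < γ + δ := by
  have hA := hV a hab.1
  have hB := hV b hab.2.1
  have hc' := inner_sub_sub_eq_of_norm_eq_one (hV c hc) a b
  have hd' := inner_sub_sub_eq_of_norm_eq_one (hV d hd) a b
  have hpc := hab.inner_sub_sub_nonneg hc
  have hpd := hab.inner_sub_sub_nonneg hd
  have hsplit : ⟪γ • c + δ • d, a + b⟫ = γ * ⟪c, a + b⟫ + δ * ⟪d, a + b⟫ := by
    rw [inner_add_left, real_inner_smul_left, real_inner_smul_left]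
  have hgap : 0 < γ * ⟪c - a, c - b⟫ + δ * ⟪d - a, d - b⟫ := by
    simp only [Set.pair_subset_iff, Set.mem_insert_iff, Set.mem_singleton_iff,
      not_and_or] at hcd
    rcases hcd with hc_new | hd_new
    · push Not at hc_new
      have := hab.2.2.2.2 c hc hc_new.1 hc_new.2
      positivity
    · push Not at hd_new
      have := hab.2.2.2.2 d hd hd_new.1 hd_new.2
      positivity
  have hlt : (α + β) * (1 + ⟪a, b⟫) < (γ + δ) * (1 + ⟪a, b⟫) := by
    rw [← inner_smul_add_smul_add_eq hA hB, h, hsplit]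
    nlinarith
  exact lt_of_mul_lt_mul_right hlt (one_add_inner_pos_of_ne_neg hA hB hab.2.2.2.1).le

end IsStrictGabrielEdge

/-- The drawing of the strict Gabriel graph on `S²` by minor great-circular arcs has no
crossings. -/
theorem strictGabriel_no_crossing (V : Finset (Euc 3)) (hV : ∀ v ∈ V, ‖v‖ = 1)
    (a b c d : Euc 3) (hab : IsStrictGabrielEdge V a b) (hcd : IsStrictGabrielEdge V c d)
    (hne : ({a, b} : Set (Euc 3)) ≠ {c, d}) :
    ∀ s : Euc 3, ‖s‖ = 1 → ¬ (s ∈ arcInterior a b ∧ s ∈ arcInterior c d) := by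
  rintro s hs ⟨hs_ab, hs_cd⟩
  have hs0 : s ≠ 0 := norm_ne_zero_iff.mp (by rw [hs]; exact one_ne_zero)
  obtain ⟨α, β, hα, hβ, rfl⟩ := exists_pos_smul_add_smul_of_mem_arcInterior hs0 hs_ab
  obtain ⟨γ, δ, hγ, hδ, hs⟩ := exists_pos_smul_add_smul_of_mem_arcInterior hs0 hs_cd
  have hcd_new := Set.not_pair_subset_pair_of_ne hab.2.2.1 hcd.2.2.1 hne
  have hab_new := Set.not_pair_subset_pair_of_ne hcd.2.2.1 hab.2.2.1 (Ne.symm hne)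
  have := hab.add_lt_add_of_eq hV hcd.1 hcd.2.1 hcd_new hγ hδ hs
  have := hcd.add_lt_add_of_eq hV hab.1 hab.2.1 hab_new hα hβ hs.symm
  linarith
end
end

section
/- Let V ⊆ S² be finite and let {a,b} be an edge of the weak Gabriel graph of V. Then the plane H = {x ∈ ℝ³ : ⟨x, a + b⟩ = 1 + ⟨a,b⟩} contains a and b and supports conv V, i.e. ⟨v, a + b⟩ ≤ 1 + ⟨a,b⟩ for every v ∈ V; consequently the closed segment [a,b] is contained in the topological boundary of conv V. -/
open scoped RealInnerProductSpace Classical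

noncomputable section

/-- For every edge `{a, b}` of the weak Gabriel graph of `V ⊆ S²`, the plane
`{x : ⟪x, a + b⟫ = 1 + ⟪a, b⟫}` contains `a` and `b` and supports `conv V`; consequently
the segment `[a, b]` lies on the boundary of `conv V`. -/
theorem weakGabriel_edge_supporting_plane (V : Finset (Euc 3)) (hV : ∀ v ∈ V, ‖v‖ = 1)
    (a b : Euc 3) (hab : IsWeakGabrielEdge V a b) :
    ⟪a, a + b⟫ = 1 + ⟪a, b⟫ ∧ ⟪b, a + b⟫ = 1 + ⟪a, b⟫ ∧
    (∀ v ∈ V, ⟪v, a + b⟫ ≤ 1 + ⟪a, b⟫) ∧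
    segment ℝ a b ⊆ frontier (convexHull ℝ (V : Set (Euc 3))) := by
  obtain ⟨haV, hbV, hne, hnanti, hcap⟩ := hab
  have ha1 : ‖a‖ = 1 := hV a haV
  have hb1 : ‖b‖ = 1 := hV b hbV
  have haa : ⟪a, a⟫ = 1 := by
    rw [real_inner_self_eq_norm_sq, ha1]; norm_num
  have hbb : ⟪b, b⟫ = 1 := by
    rw [real_inner_self_eq_norm_sq, hb1]; norm_num
  have hA : ⟪a, a + b⟫ = 1 + ⟪a, b⟫ := by rw [inner_add_right, haa]
  have hB : ⟪b, a + b⟫ = 1 + ⟪a, b⟫ := by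
    rw [inner_add_right, hbb, real_inner_comm]; ring
  have hsupp : ∀ v ∈ V, ⟪v, a + b⟫ ≤ 1 + ⟪a, b⟫ := by
    intro v hv
    have h := hcap v hv
    have hvv : ⟪v, v⟫ = 1 := by
      rw [real_inner_self_eq_norm_sq, hV v hv]; norm_num
    have hexp : ⟪v - a, v - b⟫ = ⟪v, v⟫ - ⟪v, b⟫ - ⟪a, v⟫ + ⟪a, b⟫ := by
      rw [inner_sub_left, inner_sub_right, inner_sub_right]; ring
    have hcomm : ⟪a, v⟫ = ⟪v, a⟫ := (real_inner_comm a v).symm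
    rw [inner_add_right]
    rw [hexp, hvv, hcomm] at h
    linarith
  refine ⟨hA, hB, hsupp, ?_⟩
  -- the halfspace
  set c : ℝ := 1 + ⟪a, b⟫ with hc
  have hlin : IsLinearMap ℝ (fun x : Euc 3 => ⟪x, a + b⟫) :=
    ⟨fun x y => inner_add_left _ _ _, fun r x => real_inner_smul_left _ _ _⟩
  have hconvhs : Convex ℝ {x : Euc 3 | ⟪x, a + b⟫ ≤ c} := convex_halfSpace_le hlin c
  have hhull : convexHull ℝ (V : Set (Euc 3)) ⊆ {x : Euc 3 | ⟪x, a + b⟫ ≤ c} :=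
    convexHull_min (fun v hv => hsupp v hv) hconvhs
  have habne : a + b ≠ 0 := by
    intro h
    apply hnanti
    exact eq_neg_iff_add_eq_zero.mpr (by rw [add_comm]; exact h)
  intro x hx
  have hxhull : x ∈ convexHull ℝ (V : Set (Euc 3)) :=
    (convex_convexHull ℝ _).segment_subset (subset_convexHull ℝ _ haV)
      (subset_convexHull ℝ _ hbV) hx
  have hxeq : ⟪x, a + b⟫ = c := by
    obtain ⟨s, t, hs, ht, hst, rfl⟩ := hx
    rw [inner_add_left, real_inner_smul_left, real_inner_smul_left, hA, hB]
    linear_combination c * hst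
  constructor
  · exact subset_closure hxhull
  · -- not in interior
    intro hxint
    rw [mem_interior_iff_mem_nhds, Metric.mem_nhds_iff] at hxint
    obtain ⟨ε, hε, hball⟩ := hxint
    set y : Euc 3 := x + (ε / (2 * ‖a + b‖)) • (a + b) with hy
    have hnorm : ‖a + b‖ > 0 := norm_pos_iff.mpr habne
    have hyball : y ∈ Metric.ball x ε := by
      rw [Metric.mem_ball, dist_eq_norm]
      have : y - x = (ε / (2 * ‖a + b‖)) • (a + b) := by rw [hy]; abel
      rw [this, norm_smul]
      rw [Real.norm_eq_abs, abs_of_pos (by positivity)]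
      rw [div_mul_eq_mul_div, mul_comm]
      rw [div_lt_iff₀ (by positivity)]
      nlinarith
    have hyle : ⟪y, a + b⟫ ≤ c := hhull (hball hyball)
    have : ⟪y, a + b⟫ = c + (ε / (2 * ‖a + b‖)) * ‖a + b‖ ^ 2 := by
      rw [hy, inner_add_left, real_inner_smul_left, hxeq,
        real_inner_self_eq_norm_sq]
    have hpos : 0 < ε / (2 * ‖a + b‖) * ‖a + b‖ ^ 2 := by positivity
    linarith
end
end

section
/- Let V ⊆ S² be a finite set containing no antipodal pair of points (V ∩ (−V) = ∅). If {x, y} is a strict double-normal pair of V (regarded as a subset of ℝ³), then {x, −y} is an edge of the strict Gabriel graph of the set V ∪ (−V). -/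
open scoped RealInnerProductSpace Classical

noncomputable section

lemma inner_key (v x y : Euc 3) (hv : ‖v‖ = 1) (hx : ‖x‖ = 1) :
    ⟪v - x, v - -y⟫ = ⟪v - x, y - x⟫ := by
  have hv2 : ⟪v, v⟫ = (1:ℝ) := by
    rw [real_inner_self_eq_norm_sq, hv]; norm_num
  have hx2 : ⟪x, x⟫ = (1:ℝ) := by
    rw [real_inner_self_eq_norm_sq, hx]; norm_num
  have hc : ⟪x, v⟫ = ⟪v, x⟫ := real_inner_comm v x
  simp only [inner_sub_left, inner_sub_right, inner_neg_right]
  linarith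

/-- If `V ⊆ S²` contains no antipodal pair and `{x, y}` is a strict double-normal pair of
`V`, then `{x, -y}` is an edge of the strict Gabriel graph of `V ∪ (-V)`. -/
theorem strictDoubleNormal_gabriel (V : Finset (Euc 3)) (hV : ∀ v ∈ V, ‖v‖ = 1)
    (hanti : ∀ v ∈ V, -v ∉ V) (x y : Euc 3) (hxy : IsStrictDNPair V x y) :
    IsStrictGabrielEdge (V ∪ V.image (fun v => -v)) x (-y) := by
  obtain ⟨⟨hxV, hyV, hxney, _hweak⟩, hstrict⟩ := hxy
  have hx1 := hV x hxV
  have hy1 := hV y hyV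
  have hsub : (0:ℝ) < ⟪x - y, x - y⟫ := by rw [real_inner_self_eq_norm_sq]; exact pow_pos (norm_pos_iff.mpr (sub_ne_zero.mpr hxney)) 2
  have hsub' : (0:ℝ) < ⟪y - x, y - x⟫ := by rw [real_inner_self_eq_norm_sq]; exact pow_pos (norm_pos_iff.mpr (sub_ne_zero.mpr hxney.symm)) 2
  refine ⟨Finset.mem_union_left _ hxV,
    Finset.mem_union_right _ (Finset.mem_image_of_mem _ hyV), ?_, ?_, ?_⟩
  · intro h
    exact hanti y hyV (h ▸ hxV)
  · intro h
    exact hxney (neg_injective h).symm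
  · intro v hv hvx hvy
    rcases Finset.mem_union.mp hv with hv | hv
    · rw [inner_key v x y (hV v hv) hx1]
      rcases eq_or_ne v y with rfl | hvney
      · exact hsub'
      · exact (hstrict v hv hvx hvney).1
    · obtain ⟨w, hw, rfl⟩ := Finset.mem_image.mp hv
      have hwy : w ≠ y := fun h => hvy (by rw [h])
      have hkey : ⟪-w - x, -w - -y⟫ = ⟪w - y, w - -x⟫ := by
        have h1 : -w - x = -(w - -x) := by abel
        have h2 : -w - -y = -(w - y) := by abel
        rw [h1, h2, inner_neg_neg, real_inner_comm]
      rw [hkey, inner_key w y x (hV w hw) hy1]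
      rcases eq_or_ne w x with rfl | hwx
      · exact hsub
      · exact (hstrict w hw hwx hwy).2
end
end
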